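/- Let γ ∈ ℝ and for n ≥ 1 set C_n(λ) = a_{n+N−1}·(X_n(λ) − γ·Id). Let λ ∈ ℝ, let u be a generalised eigenvector associated with λ, and for n ≥ 1 set S_n = a_{n+N−1}²·(u_{n+N−1}·u_n − u_{n+N}·u_{n−1}) and v_n = (u_{n+N−1}, u_{n+N}) ∈ ℝ². Then for every n ≥ 1: (1) S_n = (a_{n+N−1}²/a_{n−1})·⟨E·C_n(λ)·v_n, v_n⟩; (2) |S_{n+N} − S_n| ≤ a_{n+N−1}·‖(a_{n+2N−1}/a_{n+N−1})·C_{n+N}(λ) − (a_{n+N−1}/a_{n−1})·C_n(λ)‖·(u_{n+N−1}² + u_{n+N}²). -/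

import Mathlib

open Matrix
open scoped Matrix Matrix.Norms.L2Operator

/-- The product `C (n₀ + len - 1) * ⋯ * C n₀` of real matrices, larger indices on the left. -/
noncomputable def prodDescN (C : ℕ → Matrix (Fin 2) (Fin 2) ℝ) (n₀ : ℕ) :
    ℕ → Matrix (Fin 2) (Fin 2) ℝ
  | 0 => 1
  | len + 1 => C (n₀ + len) * prodDescN C n₀ len

/-!
With `x ∧ y = x₀ y₁ - x₁ y₀`, one has `⟨E M x, y⟩ = (M x) ∧ y`; in particular the form
`⟨E C_n v, v⟩` does not see the `γ · Id` part of `C_n`. The transfer matrix `X_n` maps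
`(u_{n-1}, u_n)` to `v_n = (u_{n+N-1}, u_{n+N})`, and its determinant telescopes to
`a_{n-1} / a_{n+N-1}`. Since `(M x) ∧ (M y) = det M · (x ∧ y)`, the form `⟨E C_n v_n, v_n⟩`
equals `a_{n-1} · v_n ∧ (u_{n-1}, u_n)`, which is `S_n` up to the factor in (1). At `n + N`
the vector `v_n` plays the role of `(u_{n-1}, u_n)`, so `S_{n+N} = a_{n+2N-1} ⟨E C_{n+N} v_n, v_n⟩`
and `S_{n+N} - S_n` is `a_{n+N-1}` times the form of the difference matrix; (2) then follows
from `|x ∧ y| ≤ ‖x‖ ‖y‖`.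
-/

def wedge (x y : Fin 2 → ℝ) : ℝ := x 0 * y 1 - x 1 * y 0

theorem wedge_vecCons (p q r s : ℝ) : wedge ![p, q] ![r, s] = p * s - q * r := rfl

theorem wedge_mulVec (M : Matrix (Fin 2) (Fin 2) ℝ) (x y : Fin 2 → ℝ) :
    wedge (M *ᵥ x) (M *ᵥ y) = M.det * wedge x y := by
  simp only [wedge, mulVec, dotProduct, Fin.sum_univ_two, det_fin_two]
  ring

theorem wedge_mulVec_self_of_mulVec_eq {M : Matrix (Fin 2) (Fin 2) ℝ} {x y : Fin 2 → ℝ}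
    (h : M *ᵥ x = y) : wedge (M *ᵥ y) y = M.det * wedge y x := by
  conv_lhs => rw [← h]
  rw [wedge_mulVec, h]

theorem rot_mul_mulVec_dotProduct (M : Matrix (Fin 2) (Fin 2) ℝ) (x y : Fin 2 → ℝ) :
    ((!![0, -1; 1, 0] : Matrix (Fin 2) (Fin 2) ℝ) * M) *ᵥ x ⬝ᵥ y = wedge (M *ᵥ x) y := by
  rw [← mulVec_mulVec]
  simp only [wedge, mulVec, dotProduct, Fin.sum_univ_two, of_apply, cons_val', cons_val_zero,
    cons_val_one, cons_val_fin_one]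
  ring

theorem rot_mul_smul_sub_smul_one_mulVec_dotProduct (M : Matrix (Fin 2) (Fin 2) ℝ)
    (c γ : ℝ) (x : Fin 2 → ℝ) :
    ((!![0, -1; 1, 0] : Matrix (Fin 2) (Fin 2) ℝ) * (c • (M - γ • 1))) *ᵥ x ⬝ᵥ x
      = c * wedge (M *ᵥ x) x := by
  rw [rot_mul_mulVec_dotProduct, smul_mulVec, sub_mulVec, smul_mulVec, one_mulVec]
  simp only [wedge, Pi.smul_apply, Pi.sub_apply, smul_eq_mul]
  ring

theorem abs_wedge_le (x y : Fin 2 → ℝ) :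
    |wedge x y| ≤ ‖WithLp.toLp 2 x‖ * ‖WithLp.toLp 2 y‖ := by
  simp only [EuclideanSpace.norm_eq, Fin.sum_univ_two, Real.norm_eq_abs, sq_abs]
  rw [← Real.sqrt_mul (by positivity)]
  apply Real.abs_le_sqrt
  unfold wedge
  nlinarith [sq_nonneg (x 0 * y 0 + x 1 * y 1)]

theorem abs_wedge_mulVec_self_le (M : Matrix (Fin 2) (Fin 2) ℝ) (x : Fin 2 → ℝ) :
    |wedge (M *ᵥ x) x| ≤ ‖M‖ * (x 0 ^ 2 + x 1 ^ 2) := by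
  have hx : ‖WithLp.toLp 2 x‖ ^ 2 = x 0 ^ 2 + x 1 ^ 2 := by
    rw [EuclideanSpace.norm_eq, Real.sq_sqrt (by positivity)]
    simp [Fin.sum_univ_two]
  calc |wedge (M *ᵥ x) x| ≤ ‖WithLp.toLp 2 (M *ᵥ x)‖ * ‖WithLp.toLp 2 x‖ := abs_wedge_le _ _
    _ ≤ ‖M‖ * ‖WithLp.toLp 2 x‖ * ‖WithLp.toLp 2 x‖ := by
      gcongr; exact M.l2_opNorm_mulVec (WithLp.toLp 2 x)
    _ = ‖M‖ * (x 0 ^ 2 + x 1 ^ 2) := by rw [mul_assoc, ← sq, hx]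

theorem prodDescN_mulVec {C : ℕ → Matrix (Fin 2) (Fin 2) ℝ} {v : ℕ → Fin 2 → ℝ} {n₀ : ℕ}
    (h : ∀ k, n₀ ≤ k → C k *ᵥ v k = v (k + 1)) (L : ℕ) :
    prodDescN C n₀ L *ᵥ v n₀ = v (n₀ + L) := by
  induction L with
  | zero => simp [prodDescN]
  | succ L ih => rw [prodDescN, ← mulVec_mulVec, ih, h _ (by omega), add_assoc]

theorem det_prodDescN {C : ℕ → Matrix (Fin 2) (Fin 2) ℝ} {f : ℕ → ℝ} {n₀ : ℕ}
    (hf : ∀ k, f k ≠ 0) (h : ∀ k, n₀ ≤ k → (C k).det = f k / f (k + 1)) (L : ℕ) :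
    (prodDescN C n₀ L).det = f n₀ / f (n₀ + L) := by
  induction L with
  | zero => simp [prodDescN, hf]
  | succ L ih =>
    rw [prodDescN, det_mul, ih, h _ (by omega), ← add_assoc]
    field_simp [hf]

noncomputable def transferMatrix (a b : ℕ → ℝ) (lam : ℝ) (k : ℕ) : Matrix (Fin 2) (Fin 2) ℝ :=
  !![0, 1; -(a (k - 1) / a k), (lam - b k) / a k]

theorem det_transferMatrix (a b : ℕ → ℝ) (lam : ℝ) (k : ℕ) :
    (transferMatrix a b lam k).det = a (k - 1) / a k := by
  simp [transferMatrix, det_fin_two_of]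

theorem transferMatrix_mulVec {a b u : ℕ → ℝ} {lam : ℝ} {k : ℕ} (ha : a k ≠ 0)
    (hu : a (k - 1) * u (k - 1) + b k * u k + a k * u (k + 1) = lam * u k) :
    transferMatrix a b lam k *ᵥ ![u (k - 1), u k] = ![u k, u (k + 1)] := by
  ext i
  fin_cases i
  · simp [transferMatrix]
  · simp only [transferMatrix, mulVec, dotProduct, Fin.sum_univ_two, Fin.mk_one, of_apply,
      cons_val', cons_val_zero, cons_val_one, cons_val_fin_one]
    field_simp
    linear_combination -hu

theorem prodDescN_transferMatrix_mulVec {a b u : ℕ → ℝ} {lam : ℝ} (ha : ∀ k, a k ≠ 0)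
    (hu : ∀ k, 1 ≤ k → a (k - 1) * u (k - 1) + b k * u k + a k * u (k + 1) = lam * u k)
    {m : ℕ} (hm : 1 ≤ m) (L : ℕ) :
    prodDescN (transferMatrix a b lam) m L *ᵥ ![u (m - 1), u m] = ![u (m + L - 1), u (m + L)] :=
  prodDescN_mulVec (v := fun k => ![u (k - 1), u k])
    (fun k hk => by
      simpa only [Nat.add_sub_cancel] using transferMatrix_mulVec (ha k) (hu k (by omega))) L

theorem det_prodDescN_transferMatrix (a b : ℕ → ℝ) (lam : ℝ) (ha : ∀ k, a k ≠ 0) (m L : ℕ) :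
    (prodDescN (transferMatrix a b lam) m L).det = a (m - 1) / a (m + L - 1) :=
  det_prodDescN (f := fun k => a (k - 1)) (fun _ => ha _)
    (fun k _ => det_transferMatrix a b lam k) L

theorem stmt16_general (N : ℕ)
    (a b : ℕ → ℝ) (hapos : ∀ n, 0 < a n)
    (γ lam : ℝ)
    -- `X n = X_n(λ) = B_{n+N-1}(λ) ⋯ B_n(λ)`
    (X : ℕ → Matrix (Fin 2) (Fin 2) ℝ)
    (hX : ∀ n : ℕ, X n =
      prodDescN (fun k => !![0, 1; -(a (k - 1) / a k), (lam - b k) / a k]) n N)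
    -- `C n = C_n(λ) = a_{n+N-1} (X_n(λ) − γ Id)`
    (C : ℕ → Matrix (Fin 2) (Fin 2) ℝ)
    (hC : ∀ n : ℕ, C n = a (n + N - 1) • (X n - γ • (1 : Matrix (Fin 2) (Fin 2) ℝ)))
    -- `u` is a generalised eigenvector associated with `λ`
    (u : ℕ → ℝ)
    (hu : ∀ n : ℕ, 1 ≤ n → a (n - 1) * u (n - 1) + b n * u n + a n * u (n + 1) = lam * u n)
    (S : ℕ → ℝ)
    (hS : ∀ n : ℕ, S n = a (n + N - 1) ^ 2 * (u (n + N - 1) * u n - u (n + N) * u (n - 1))) :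
    ∀ n : ℕ, 1 ≤ n →
      S n = (a (n + N - 1) ^ 2 / a (n - 1)) *
          ((((!![0, -1; 1, 0] : Matrix (Fin 2) (Fin 2) ℝ) * C n).mulVec
              ![u (n + N - 1), u (n + N)]) ⬝ᵥ ![u (n + N - 1), u (n + N)]) ∧
      |S (n + N) - S n| ≤ a (n + N - 1) *
          ‖(a (n + 2 * N - 1) / a (n + N - 1)) • C (n + N)
            - (a (n + N - 1) / a (n - 1)) • C n‖ *
          (u (n + N - 1) ^ 2 + u (n + N) ^ 2) := by
  intro n hn
  have ha : ∀ k, a k ≠ 0 := fun k => (hapos k).ne'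
  have hXu : ∀ m, 1 ≤ m → X m *ᵥ ![u (m - 1), u m] = ![u (m + N - 1), u (m + N)] :=
    fun m hm => by rw [hX]; exact prodDescN_transferMatrix_mulVec ha hu hm N
  have hform : ∀ m x, ((!![0, -1; 1, 0] : Matrix (Fin 2) (Fin 2) ℝ) * C m) *ᵥ x ⬝ᵥ x
      = a (m + N - 1) * wedge (X m *ᵥ x) x := fun m x => by
    rw [hC, rot_mul_smul_sub_smul_one_mulVec_dotProduct]
  have hdet : (X n).det = a (n - 1) / a (n + N - 1) := by
    rw [hX]; exact det_prodDescN_transferMatrix a b lam ha n N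
  set v : Fin 2 → ℝ := ![u (n + N - 1), u (n + N)]
  have hSn : S n = a (n + N - 1) ^ 2 / a (n - 1) *
      (((!![0, -1; 1, 0] : Matrix (Fin 2) (Fin 2) ℝ) * C n) *ᵥ v ⬝ᵥ v) := by
    rw [hform, wedge_mulVec_self_of_mulVec_eq (hXu n hn), hdet, hS, wedge_vecCons]
    field_simp [ha (n - 1), ha (n + N - 1)]
  have hSnN : S (n + N) = a (n + 2 * N - 1) *
      (((!![0, -1; 1, 0] : Matrix (Fin 2) (Fin 2) ℝ) * C (n + N)) *ᵥ v ⬝ᵥ v) := by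
    rw [hform, hXu _ (by omega), hS, show n + 2 * N - 1 = n + N + N - 1 by omega,
      wedge_vecCons]
    ring
  refine ⟨hSn, ?_⟩
  set D := (a (n + 2 * N - 1) / a (n + N - 1)) • C (n + N) - (a (n + N - 1) / a (n - 1)) • C n
  have hdiff : S (n + N) - S n = a (n + N - 1) * wedge (D *ᵥ v) v := by
    rw [hSnN, hSn, rot_mul_mulVec_dotProduct, rot_mul_mulVec_dotProduct]
    simp only [D, sub_mulVec, smul_mulVec, wedge, Pi.sub_apply, Pi.smul_apply, smul_eq_mul]
    field_simp [ha (n - 1), ha (n + N - 1)]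
    ring
  rw [hdiff, abs_mul, abs_of_pos (hapos _), mul_assoc]
  exact mul_le_mul_of_nonneg_left (abs_wedge_mulVec_self_le D _) (hapos _).le

theorem stmt16 (N : ℕ) (hN : 1 ≤ N)
    (a b : ℕ → ℝ) (hapos : ∀ n, 0 < a n)
    (γ lam : ℝ)
    -- `X n = X_n(λ) = B_{n+N-1}(λ) ⋯ B_n(λ)`
    (X : ℕ → Matrix (Fin 2) (Fin 2) ℝ)
    (hX : ∀ n : ℕ, X n =
      prodDescN (fun k => !![0, 1; -(a (k - 1) / a k), (lam - b k) / a k]) n N)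
    -- `C n = C_n(λ) = a_{n+N-1} (X_n(λ) − γ Id)`
    (C : ℕ → Matrix (Fin 2) (Fin 2) ℝ)
    (hC : ∀ n : ℕ, C n = a (n + N - 1) • (X n - γ • (1 : Matrix (Fin 2) (Fin 2) ℝ)))
    -- `u` is a generalised eigenvector associated with `λ`
    (u : ℕ → ℝ)
    (hu : ∀ n : ℕ, 1 ≤ n → a (n - 1) * u (n - 1) + b n * u n + a n * u (n + 1) = lam * u n)
    (S : ℕ → ℝ)
    (hS : ∀ n : ℕ, S n = a (n + N - 1) ^ 2 * (u (n + N - 1) * u n - u (n + N) * u (n - 1))) :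
    ∀ n : ℕ, 1 ≤ n →
      S n = (a (n + N - 1) ^ 2 / a (n - 1)) *
          ((((!![0, -1; 1, 0] : Matrix (Fin 2) (Fin 2) ℝ) * C n).mulVec
              ![u (n + N - 1), u (n + N)]) ⬝ᵥ ![u (n + N - 1), u (n + N)]) ∧
      |S (n + N) - S n| ≤ a (n + N - 1) *
          ‖(a (n + 2 * N - 1) / a (n + N - 1)) • C (n + N)
            - (a (n + N - 1) / a (n - 1)) • C n‖ *
          (u (n + N - 1) ^ 2 + u (n + N) ^ 2) :=
  stmt16_general N a b hapos γ lam X hX C hC u hu S hS
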